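/- Let p be a prime number. The localization away from p of the ring ℤ[X]/(Φ_p) is a Dedekind domain; in particular it is a Noetherian ring. -/

import Mathlib

/-!
`ℤ[X]/(Φ_p)` is isomorphic to `ℤ[ζ_p]` (the cyclotomic polynomial is the minimal polynomial of a
primitive `p`-th root of unity), and `ℤ[ζ_p]` is the ring of integers of `ℚ(ζ_p)`, hence a Dedekind
domain. Localizing a Dedekind domain away from a nonzero element keeps it Dedekind, and
`p ≠ 0` in `ℤ[X]/(Φ_p)` because `ℤ` embeds into it.
-/

open Polynomial

theorem IsDedekindDomain.of_ringEquiv {A B : Type*} [CommRing A] [CommRing B] [IsDedekindDomain B]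
    (e : A ≃+* B) : IsDedekindDomain A :=
  have : IsDomain A := e.toMulEquiv.isDomain B
  have : IsNoetherianRing A := isNoetherianRing_of_ringEquiv B e.symm
  have : Ring.DimensionLEOne A := .of_ringEquiv e
  have : IsIntegrallyClosed A := .of_equiv e.symm
  { }

theorem IsDedekindDomain.localization_away {A : Type*} [CommRing A] [IsDedekindDomain A] {r : A}
    (hr : r ≠ 0) : IsDedekindDomain (Localization.Away r) :=
  have hM := powers_le_nonZeroDivisors_of_noZeroDivisors hr
  have := IsLocalization.isDomain_localization hM
  IsLocalization.isDedekindDomain A hM _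

theorem AdjoinRoot.charZero_of_degree_ne_zero {R : Type*} [CommRing R] [IsDomain R] [CharZero R]
    {f : R[X]} (hf : f.degree ≠ 0) : CharZero (AdjoinRoot f) :=
  charZero_of_injective_algebraMap (of.injective_of_degree_ne_zero hf)

theorem AdjoinRoot.isDedekindDomain_minpoly {K : Type*} [Field K] [NumberField K] {x : K}
    [IsIntegralClosure (Algebra.adjoin ℤ {x}) ℤ K] :
    IsDedekindDomain (AdjoinRoot (minpoly ℤ x)) :=
  have : IsDedekindDomain (Algebra.adjoin ℤ {x}) := IsIntegralClosure.isDedekindDomain ℤ ℚ K _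
  have hx : IsIntegral ℤ x := IsIntegralClosure.isIntegral_iff.mpr
    ⟨(⟨x, Algebra.self_mem_adjoin_singleton ℤ x⟩ : Algebra.adjoin ℤ {x}), rfl⟩
  .of_ringEquiv (minpoly.equivAdjoin hx).toRingEquiv

theorem AdjoinRoot.isDedekindDomain_cyclotomic (p : ℕ) [hp : Fact p.Prime] :
    IsDedekindDomain (AdjoinRoot (cyclotomic p ℤ)) := by
  -- Given explicitly: instance search elaborates `Algebra ℚ (CyclotomicField p ℚ)` as
  -- `DivisionRing.toRatAlgebra`, which is not reducibly defeq to the instance's own algebra.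
  have : IsCyclotomicExtension {p} ℚ (CyclotomicField p ℚ) :=
    CyclotomicField.instIsCyclotomicExtensionSingletonNatSetOfCharZero p ℚ
  have hζ := IsCyclotomicExtension.zeta_spec p ℚ (CyclotomicField p ℚ)
  have := IsCyclotomicExtension.Rat.isIntegralClosure_adjoin_singleton_of_prime hζ
  rw [cyclotomic_eq_minpoly hζ hp.out.pos]
  exact isDedekindDomain_minpoly

/-- For a prime `p`, the localization away from `p` of `ℤ[X]/(Φ_p)` is a
Dedekind domain; in particular it is a Noetherian ring. -/
theorem localization_quotient_cyclotomic_isDedekindDomain (p : ℕ) (hp : p.Prime) :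
    IsDedekindDomain
        (Localization.Away ((p : ℕ) : Polynomial ℤ ⧸ Ideal.span {cyclotomic p ℤ})) ∧
      IsNoetherianRing
        (Localization.Away ((p : ℕ) : Polynomial ℤ ⧸ Ideal.span {cyclotomic p ℤ})) := by
  have : Fact p.Prime := ⟨hp⟩
  have := AdjoinRoot.isDedekindDomain_cyclotomic p
  have := AdjoinRoot.charZero_of_degree_ne_zero (degree_cyclotomic_pos p ℤ hp.pos).ne'
  have := IsDedekindDomain.localization_away
    (Nat.cast_ne_zero.mpr hp.ne_zero : ((p : ℕ) : AdjoinRoot (cyclotomic p ℤ)) ≠ 0)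
  exact ⟨this, inferInstance⟩
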